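/- Continuity of normalized hazard-type integrals under uniform convergence (supporting lemma for the GLR statistic): Let tau > 0, delta > 0, and lambda in [0, 1]. Let u_n, v_n, u, v : [0, tau] -> [0, 1] be nonincreasing right-continuous functions with u and v continuous, sup|u_n - u| -> 0, sup|v_n - v| -> 0, and lambda u_n(t-) + (1 - lambda) v_n(t-) >= delta for all t in (0, tau] and all n. Then integral over (0, tau] of [ u_n(t-) / ( lambda u_n(t-) + (1-lambda) v_n(t-) ) ] dv_n(t) converges to integral over (0, tau] of [ u(t) / ( lambda u(t) + (1-lambda) v(t) ) ] dv(t) as n -> infinity. -/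

import Mathlib

open MeasureTheory Filter Set Function Topology
open scoped ENNReal

/-!
The integrands converge uniformly on `(0, τ]`: since `u₀` and `v₀` are continuous, uniform
convergence of `uₙ`, `vₙ` passes to their left limits, and the denominators stay `≥ δ` (also in
the limit, by continuity), where `x / (λ x + (1 - λ) y)` is Lipschitz. As the measures `νₙ` have
mass at most `1`, it remains to show `∫ f dνₙ → ∫ f dν₀` for the continuous limit integrand `f`.
On a fine enough uniform partition `f` is uniformly close to a step function, whose integrals
are finite combinations of `νₙ (x, y] = vₙ x - vₙ y → v₀ x - v₀ y = ν₀ (x, y]`.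
-/

namespace AntitoneOn

variable {f g : ℝ → ℝ} {a b s t M : ℝ}

theorem tendsto_leftLim (hf : AntitoneOn f (Icc a b)) (ht : t ∈ Ioc a b) :
    Tendsto f (𝓝[<] t) (𝓝 (leftLim f t)) := by
  have hsub : Ioo a t ⊆ Icc a b := fun x hx => ⟨hx.1.le, hx.2.le.trans ht.2⟩
  have hbdd : BddBelow (f '' Ioo a t) :=
    ⟨f t, by rintro _ ⟨x, hx, rfl⟩; exact hf (hsub hx) (Ioc_subset_Icc_self ht) hx.2.le⟩
  have h := (hf.mono hsub).tendsto_nhdsWithin_Ioo_left (nonempty_Ioo.2 ht.1) hbdd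
  rwa [leftLim_eq_of_tendsto h]

theorem le_leftLim (hf : AntitoneOn f (Icc a b)) (ht : t ∈ Ioc a b) : f t ≤ leftLim f t :=
  ge_of_tendsto (hf.tendsto_leftLim ht) <| by
    filter_upwards [Icc_mem_nhdsLT_of_mem ht, self_mem_nhdsWithin] with x hx hxt
    exact hf hx (Ioc_subset_Icc_self ht) (le_of_lt hxt)

theorem leftLim_le (hf : AntitoneOn f (Icc a b)) (ht : t ∈ Ioc a b) (hs : s ∈ Icc a b)
    (hst : s < t) : leftLim f t ≤ f s :=
  le_of_tendsto (hf.tendsto_leftLim ht) <| by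
    filter_upwards [Ioo_mem_nhdsLT hst] with x hx
    exact hf hs ⟨hs.1.trans hx.1.le, hx.2.le.trans ht.2⟩ hx.1.le

protected theorem leftLim (hf : AntitoneOn f (Icc a b)) : AntitoneOn (leftLim f) (Ioc a b) := by
  intro s hs t ht hst
  rcases hst.eq_or_lt with rfl | hst
  · exact le_rfl
  · exact (hf.leftLim_le ht (Ioc_subset_Icc_self hs) hst).trans (hf.le_leftLim hs)

theorem aemeasurable_leftLim (hf : AntitoneOn f (Icc a b)) {μ : Measure ℝ} :
    AEMeasurable (leftLim f) (μ.restrict (Ioc a b)) :=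
  aemeasurable_restrict_of_antitoneOn measurableSet_Ioc hf.leftLim

theorem abs_leftLim_sub_le (hf : AntitoneOn f (Icc a b)) (ht : t ∈ Ioc a b)
    (hg : ContinuousOn g (Icc a b)) (hM : ∀ x ∈ Icc a b, |f x - g x| ≤ M) :
    |leftLim f t - g t| ≤ M := by
  have hg' : Tendsto g (𝓝[<] t) (𝓝 (g t)) :=
    (hg t (Ioc_subset_Icc_self ht)).tendsto.mono_left
      (nhdsWithin_le_of_mem (Icc_mem_nhdsLT_of_mem ht))
  exact le_of_tendsto ((hf.tendsto_leftLim ht).sub hg').abs <|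
    eventually_of_mem (Icc_mem_nhdsLT_of_mem ht) hM

end AntitoneOn

theorem abs_sub_le_iSup_abs_sub {α : Type*} {S : Set α} {f g : α → ℝ}
    (hf : ∀ x ∈ S, f x ∈ Icc 0 1) (hg : ∀ x ∈ S, g x ∈ Icc 0 1) {x : α} (hx : x ∈ S) :
    |f x - g x| ≤ ⨆ y : S, |f y - g y| :=
  le_ciSup (f := fun y : S => |f y - g y|) ⟨1, by
    rintro _ ⟨y, rfl⟩
    exact abs_sub_le_of_nonneg_of_le (hf y y.2).1 (hf y y.2).2 (hg y y.2).1 (hg y y.2).2⟩ ⟨x, hx⟩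

theorem AntitoneOn.abs_leftLim_sub_le_iSup {f g : ℝ → ℝ} {a b t : ℝ}
    (hf : AntitoneOn f (Icc a b)) (hf₁ : ∀ x ∈ Icc a b, f x ∈ Icc 0 1)
    (hg₁ : ∀ x ∈ Icc a b, g x ∈ Icc 0 1) (hg : ContinuousOn g (Icc a b)) (ht : t ∈ Ioc a b) :
    |leftLim f t - g t| ≤ ⨆ s : Icc a b, |f s - g s| :=
  hf.abs_leftLim_sub_le ht hg fun _ hx => abs_sub_le_iSup_abs_sub hf₁ hg₁ hx

theorem tendsto_of_abs_sub_le {ι : Type*} {l : Filter ι} {x e : ι → ℝ} {y : ℝ}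
    (h : ∀ i, |x i - y| ≤ e i) (he : Tendsto e l (𝓝 0)) : Tendsto x l (𝓝 y) :=
  tendsto_iff_norm_sub_tendsto_zero.2 (squeeze_zero (fun _ => norm_nonneg _) h he)

theorem ContinuousOn.forall_Icc_le_of_forall_Ioc {g : ℝ → ℝ} {a b c : ℝ} (hab : a ≠ b)
    (hg : ContinuousOn g (Icc a b)) (h : ∀ t ∈ Ioc a b, c ≤ g t) : ∀ t ∈ Icc a b, c ≤ g t :=
  fun t ht => ContinuousWithinAt.closure_le (by rwa [closure_Ioc hab]) continuousWithinAt_const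
    ((hg t ht).mono Ioc_subset_Icc_self) h

theorem abs_div_sub_div_le {a b c d δ : ℝ} (hδ : 0 < δ) (hb : |b| ≤ 1) (hc : δ ≤ c)
    (hd : δ ≤ d) : |a / c - b / d| ≤ |a - b| / δ + |c - d| / δ ^ 2 := by
  have hc0 : 0 < c := hδ.trans_le hc
  have hd0 : 0 < d := hδ.trans_le hd
  have hsplit : a / c - b / d = (a - b) / c + b * (d - c) / (c * d) := by
    field_simp
    ring
  rw [hsplit]
  refine (abs_add_le _ _).trans (add_le_add ?_ ?_)
  · rw [abs_div, abs_of_pos hc0]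
    exact div_le_div_of_nonneg_left (abs_nonneg _) hδ hc
  · rw [abs_div, abs_mul, abs_of_pos (mul_pos hc0 hd0), abs_sub_comm d c, sq]
    exact div_le_div₀ (abs_nonneg _) (mul_le_of_le_one_left (abs_nonneg _) hb)
      (mul_pos hδ hδ) (mul_le_mul hc hd hδ.le hc0.le)

theorem abs_convexComb_sub_le {lam x x' y y' : ℝ} (hlam : lam ∈ Icc (0 : ℝ) 1) :
    |(lam * x + (1 - lam) * y) - (lam * x' + (1 - lam) * y')| ≤ |x - x'| + |y - y'| := by
  obtain ⟨h0, h1⟩ := hlam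
  have h : (lam * x + (1 - lam) * y) - (lam * x' + (1 - lam) * y') =
      lam * (x - x') + (1 - lam) * (y - y') := by ring
  rw [h]
  refine (abs_add_le _ _).trans ?_
  rw [abs_mul, abs_mul, abs_of_nonneg h0, abs_of_nonneg (sub_nonneg.2 h1)]
  nlinarith [abs_nonneg (x - x'), abs_nonneg (y - y')]

theorem abs_div_convexComb_sub_div_convexComb_le {lam x x' y y' δ ε ε' : ℝ}
    (hlam : lam ∈ Icc (0 : ℝ) 1) (hδ : 0 < δ) (hx' : x' ∈ Icc (0 : ℝ) 1)
    (hden : δ ≤ lam * x + (1 - lam) * y) (hden' : δ ≤ lam * x' + (1 - lam) * y')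
    (hx : |x - x'| ≤ ε) (hy : |y - y'| ≤ ε') :
    |x / (lam * x + (1 - lam) * y) - x' / (lam * x' + (1 - lam) * y')| ≤
      ε / δ + (ε + ε') / δ ^ 2 :=
  (abs_div_sub_div_le hδ (abs_le.2 ⟨by linarith [hx'.1], hx'.2⟩) hden hden').trans <|
    add_le_add (div_le_div_of_nonneg_right hx hδ.le) <|
      div_le_div_of_nonneg_right ((abs_convexComb_sub_le hlam).trans (add_le_add hx hy))
        (sq_nonneg δ)

theorem integrableOn_of_norm_le {α E : Type*} [MeasurableSpace α] [NormedAddCommGroup E]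
    {μ : Measure α} {s : Set α} {f : α → E} {C : ℝ} (hs : MeasurableSet s) (hμ : μ s ≠ ∞)
    (hf : AEStronglyMeasurable f (μ.restrict s)) (hC : ∀ x ∈ s, ‖f x‖ ≤ C) :
    IntegrableOn f s μ :=
  have := isFiniteMeasure_restrict.2 hμ
  Integrable.of_bound hf C ((ae_restrict_iff' hs).2 (ae_of_all _ hC))

theorem ContinuousOn.integrableOn_Ioc {μ : Measure ℝ} {f : ℝ → ℝ} {a b : ℝ}
    (hf : ContinuousOn f (Icc a b)) (hμ : μ (Ioc a b) ≠ ∞) : IntegrableOn f (Ioc a b) μ := by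
  obtain ⟨C, hC⟩ := isCompact_Icc.exists_bound_of_continuousOn hf
  exact integrableOn_of_norm_le measurableSet_Ioc hμ
    ((hf.mono Ioc_subset_Icc_self).aestronglyMeasurable measurableSet_Ioc)
    fun x hx => hC x (Ioc_subset_Icc_self hx)

theorem tendsto_setIntegral_sub_of_abs_sub_le {ι α : Type*} [MeasurableSpace α] {l : Filter ι}
    {μ : ι → Measure α} {s : Set α} {F : ι → α → ℝ} {f : α → ℝ} {C : ι → ℝ} {M : ℝ}
    (hs : MeasurableSet s) (hμ : ∀ i, μ i s ≠ ∞) (hμM : ∀ i, (μ i).real s ≤ M)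
    (hF : ∀ i, AEStronglyMeasurable (F i) ((μ i).restrict s)) (hf : ∀ i, IntegrableOn f s (μ i))
    (hFf : ∀ i, ∀ x ∈ s, |F i x - f x| ≤ C i) (hC : Tendsto C l (𝓝 0)) :
    Tendsto (fun i => (∫ x in s, F i x ∂μ i) - ∫ x in s, f x ∂μ i) l (𝓝 0) := by
  have hdiff : ∀ i, IntegrableOn (fun x => F i x - f x) s (μ i) := fun i =>
    integrableOn_of_norm_le hs (hμ i) ((hF i).sub (hf i).aestronglyMeasurable) (hFf i)
  have hFint : ∀ i, IntegrableOn (F i) s (μ i) := fun i =>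
    ((hdiff i).add (hf i)).congr_fun (fun x _ => sub_add_cancel _ _) hs
  refine squeeze_zero_norm (fun i => ?_) (by simpa using hC.abs.mul_const M)
  rw [← integral_sub (hFint i) (hf i)]
  calc ‖∫ x in s, F i x - f x ∂μ i‖ ≤ |C i| * (μ i).real s :=
        norm_setIntegral_le_of_norm_le_const (hμ i).lt_top fun x hx =>
          (hFf i x hx).trans (le_abs_self _)
    _ ≤ |C i| * M := mul_le_mul_of_nonneg_left (hμM i) (abs_nonneg _)

section Partition

variable {μ : Measure ℝ} {f : ℝ → ℝ} {x : ℕ → ℝ} {k : ℕ}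

theorem Monotone.Ioc_subset_Ioc (hx : Monotone x) {j : ℕ} (hj : j < k) :
    Ioc (x j) (x (j + 1)) ⊆ Ioc (x 0) (x k) :=
  Set.Ioc_subset_Ioc (hx j.zero_le) (hx hj)

theorem setIntegral_Ioc_eq_sum (hx : Monotone x) (hf : IntegrableOn f (Ioc (x 0) (x k)) μ) :
    ∫ t in Ioc (x 0) (x k), f t ∂μ =
      ∑ j ∈ Finset.range k, ∫ t in Ioc (x j) (x (j + 1)), f t ∂μ := by
  rw [← intervalIntegral.integral_of_le (hx k.zero_le),
    ← intervalIntegral.sum_integral_adjacent_intervals fun j hj =>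
      (intervalIntegrable_iff_integrableOn_Ioc_of_le (hx j.le_succ)).2
        (hf.mono_set (hx.Ioc_subset_Ioc hj))]
  exact Finset.sum_congr rfl fun j _ => intervalIntegral.integral_of_le (hx j.le_succ)

theorem abs_setIntegral_Ioc_sub_sum_le {η : ℝ} (hx : Monotone x)
    (hμ : μ (Ioc (x 0) (x k)) ≠ ∞) (hf : IntegrableOn f (Ioc (x 0) (x k)) μ)
    (hosc : ∀ j < k, ∀ t ∈ Ioc (x j) (x (j + 1)), |f t - f (x (j + 1))| ≤ η) :
    |∫ t in Ioc (x 0) (x k), f t ∂μ -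
        ∑ j ∈ Finset.range k, f (x (j + 1)) * μ.real (Ioc (x j) (x (j + 1)))| ≤
      η * μ.real (Ioc (x 0) (x k)) := by
  have hfin : ∀ j < k, μ (Ioc (x j) (x (j + 1))) < ∞ := fun j hj =>
    (measure_mono (hx.Ioc_subset_Ioc hj)).trans_lt hμ.lt_top
  have hmass :
      μ.real (Ioc (x 0) (x k)) = ∑ j ∈ Finset.range k, μ.real (Ioc (x j) (x (j + 1))) := by
    simpa using setIntegral_Ioc_eq_sum (f := fun _ => (1 : ℝ)) hx (integrableOn_const hμ)
  rw [setIntegral_Ioc_eq_sum hx hf, hmass, Finset.mul_sum, ← Finset.sum_sub_distrib]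
  refine (Finset.abs_sum_le_sum_abs _ _).trans (Finset.sum_le_sum fun j hj => ?_)
  have hj := Finset.mem_range.1 hj
  rw [mul_comm, ← smul_eq_mul, ← setIntegral_const,
    ← integral_sub (hf.mono_set (hx.Ioc_subset_Ioc hj)) (integrableOn_const (hfin j hj).ne)]
  exact norm_setIntegral_le_of_norm_le_const (f := fun t => f t - f (x (j + 1))) (hfin j hj)
    (hosc j hj)

end Partition

theorem ContinuousOn.exists_partition_abs_sub_le {f : ℝ → ℝ} {a b η : ℝ} (hab : a ≤ b)
    (hf : ContinuousOn f (Icc a b)) (hη : 0 < η) :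
    ∃ (k : ℕ) (x : ℕ → ℝ), Monotone x ∧ x 0 = a ∧ x k = b ∧
      ∀ j < k, ∀ t ∈ Ioc (x j) (x (j + 1)), |f t - f (x (j + 1))| ≤ η := by
  obtain ⟨h, hh, hfh⟩ := Metric.uniformContinuousOn_iff_le.1
    (isCompact_Icc.uniformContinuousOn_of_continuous hf) η hη
  obtain ⟨k, hk⟩ := exists_nat_gt ((b - a) / h)
  have hk0 : (0 : ℝ) < k := (div_nonneg (sub_nonneg.2 hab) hh.le).trans_lt hk
  have hstep : (b - a) / k ≤ h := ((div_lt_iff₀' hk0).2 ((div_lt_iff₀ hh).1 hk)).le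
  set x : ℕ → ℝ := fun j => a + j * ((b - a) / k)
  have hx : Monotone x := fun i j hij =>
    add_le_add le_rfl (mul_le_mul_of_nonneg_right (Nat.cast_le.2 hij)
      (div_nonneg (sub_nonneg.2 hab) hk0.le))
  have hx0 : x 0 = a := by simp [x]
  have hxk : x k = b := by simp [x, mul_div_cancel₀ _ hk0.ne']
  refine ⟨k, x, hx, hx0, hxk, fun j hj t ht => ?_⟩
  have hmem : ∀ i ≤ k, x i ∈ Icc a b := fun i hi => ⟨hx0 ▸ hx i.zero_le, hxk ▸ hx hi⟩
  have ht' : t ∈ Icc a b := ⟨(hmem j hj.le).1.trans ht.1.le, ht.2.trans (hmem (j + 1) hj).2⟩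
  have hdist : dist t (x (j + 1)) ≤ h := by
    rw [Real.dist_eq, abs_sub_comm, abs_of_nonneg (sub_nonneg.2 ht.2)]
    have : x (j + 1) - x j = (b - a) / k := by simp only [x]; push_cast; ring
    linarith [ht.1]
  simpa [Real.dist_eq] using hfh t ht' (x (j + 1)) (hmem (j + 1) hj) hdist

theorem tendsto_setIntegral_Ioc_of_tendsto_measureReal {ι : Type*} {l : Filter ι}
    {μ : ι → Measure ℝ} {μ₀ : Measure ℝ} {f : ℝ → ℝ} {a b : ℝ} (hab : a ≤ b)
    (hμ : ∀ i, μ i (Ioc a b) ≠ ∞) (hμ₀ : μ₀ (Ioc a b) ≠ ∞)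
    (hconv : ∀ x ∈ Icc a b, ∀ y ∈ Icc a b, x ≤ y →
      Tendsto (fun i => (μ i).real (Ioc x y)) l (𝓝 (μ₀.real (Ioc x y))))
    (hf : ContinuousOn f (Icc a b)) :
    Tendsto (fun i => ∫ t in Ioc a b, f t ∂μ i) l (𝓝 (∫ t in Ioc a b, f t ∂μ₀)) := by
  rw [Metric.tendsto_nhds]
  intro ε hε
  set M := μ₀.real (Ioc a b) + 1
  have hM : 0 < M := by positivity
  obtain ⟨k, x, hx, hx0, hxk, hosc⟩ :=
    hf.exists_partition_abs_sub_le hab (η := ε / (3 * M)) (by positivity)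
  set S : Measure ℝ → ℝ := fun ν =>
    ∑ j ∈ Finset.range k, f (x (j + 1)) * ν.real (Ioc (x j) (x (j + 1)))
  have hmem : ∀ j ≤ k, x j ∈ Icc a b := fun j hj => ⟨hx0 ▸ hx j.zero_le, hxk ▸ hx hj⟩
  have hS : Tendsto (fun i => S (μ i)) l (𝓝 (S μ₀)) :=
    tendsto_finsetSum _ fun j hj => (hconv _ (hmem j (Finset.mem_range.1 hj).le) _
      (hmem (j + 1) (Finset.mem_range.1 hj)) (hx j.le_succ)).const_mul _
  have hRiemann : ∀ ν : Measure ℝ, ν (Ioc a b) ≠ ∞ → ν.real (Ioc a b) ≤ M →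
      |∫ t in Ioc a b, f t ∂ν - S ν| ≤ ε / 3 := by
    intro ν hν hνM
    subst hx0 hxk
    calc _ ≤ ε / (3 * M) * ν.real (Ioc (x 0) (x k)) :=
          abs_setIntegral_Ioc_sub_sum_le hx hν (hf.integrableOn_Ioc hν) hosc
      _ ≤ ε / (3 * M) * M := mul_le_mul_of_nonneg_left hνM (by positivity)
      _ = ε / 3 := by field_simp
  filter_upwards [Metric.tendsto_nhds.1 hS (ε / 3) (by positivity),
    (hconv a (left_mem_Icc.2 hab) b (right_mem_Icc.2 hab) hab).eventually
      (gt_mem_nhds (lt_add_one _))] with i hSi hμi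
  rw [Real.dist_eq] at hSi ⊢
  have h₁ := hRiemann (μ i) (hμ i) hμi.le
  have h₀ := hRiemann μ₀ hμ₀ (le_add_of_nonneg_right zero_le_one)
  rw [abs_sub_comm] at h₀
  linarith [abs_sub_le (∫ t in Ioc a b, f t ∂μ i) (S (μ i)) (∫ t in Ioc a b, f t ∂μ₀),
    abs_sub_le (S (μ i)) (S μ₀) (∫ t in Ioc a b, f t ∂μ₀)]

section Stieltjes

variable {μ : Measure ℝ} {w : ℝ → ℝ} {a b : ℝ}

theorem measureReal_Ioc_of_eq_ofReal (h : μ (Ioc a b) = ENNReal.ofReal (w a - w b)) :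
    μ.real (Ioc a b) = max (w a - w b) 0 := by
  rw [measureReal_def, h, ENNReal.toReal_ofReal']

theorem measure_Ioc_ne_top_of_eq_ofReal (h : μ (Ioc a b) = ENNReal.ofReal (w a - w b)) :
    μ (Ioc a b) ≠ ∞ :=
  h ▸ ENNReal.ofReal_ne_top

end Stieltjes

theorem tendsto_setIntegral_Ioc_of_stieltjes {ι : Type*} {l : Filter ι} {μ : ι → Measure ℝ}
    {μ₀ : Measure ℝ} {w : ι → ℝ → ℝ} {w₀ f : ℝ → ℝ} {a b : ℝ} (hab : a ≤ b)
    (hμ : ∀ i, ∀ x y : ℝ, x ∈ Icc a b → y ∈ Icc a b → x ≤ y →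
      μ i (Ioc x y) = ENNReal.ofReal (w i x - w i y))
    (hμ₀ : ∀ x y : ℝ, x ∈ Icc a b → y ∈ Icc a b → x ≤ y →
      μ₀ (Ioc x y) = ENNReal.ofReal (w₀ x - w₀ y))
    (hw : ∀ x ∈ Icc a b, Tendsto (fun i => w i x) l (𝓝 (w₀ x)))
    (hf : ContinuousOn f (Icc a b)) :
    Tendsto (fun i => ∫ t in Ioc a b, f t ∂μ i) l (𝓝 (∫ t in Ioc a b, f t ∂μ₀)) := by
  have ha := left_mem_Icc.2 hab
  have hb := right_mem_Icc.2 hab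
  refine tendsto_setIntegral_Ioc_of_tendsto_measureReal hab
    (fun i => measure_Ioc_ne_top_of_eq_ofReal (hμ i a b ha hb hab))
    (measure_Ioc_ne_top_of_eq_ofReal (hμ₀ a b ha hb hab)) (fun x hx y hy hxy => ?_) hf
  simp only [measureReal_Ioc_of_eq_ofReal (hμ _ x y hx hy hxy),
    measureReal_Ioc_of_eq_ofReal (hμ₀ x y hx hy hxy)]
  exact ((hw x hx).sub (hw y hy)).max tendsto_const_nhds

theorem normalized_hazard_integral_continuity_general
    (τ δ lam : ℝ) (hτ : 0 < τ) (hδ : 0 < δ) (hlam : lam ∈ Set.Icc (0 : ℝ) 1)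
    (u v : ℕ → ℝ → ℝ) (u₀ v₀ : ℝ → ℝ)
    (humono : ∀ n, AntitoneOn (u n) (Set.Icc 0 τ))
    (hvmono : ∀ n, AntitoneOn (v n) (Set.Icc 0 τ))
    (hurange : ∀ n, ∀ t ∈ Set.Icc 0 τ, u n t ∈ Set.Icc (0 : ℝ) 1)
    (hvrange : ∀ n, ∀ t ∈ Set.Icc 0 τ, v n t ∈ Set.Icc (0 : ℝ) 1)
    (hu₀range : ∀ t ∈ Set.Icc 0 τ, u₀ t ∈ Set.Icc (0 : ℝ) 1)
    (hv₀range : ∀ t ∈ Set.Icc 0 τ, v₀ t ∈ Set.Icc (0 : ℝ) 1)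
    (hu₀cont : ContinuousOn u₀ (Set.Icc 0 τ)) (hv₀cont : ContinuousOn v₀ (Set.Icc 0 τ))
    (huconv : Tendsto (fun n => ⨆ t : Set.Icc (0 : ℝ) τ, |u n t - u₀ t|) atTop (𝓝 0))
    (hvconv : Tendsto (fun n => ⨆ t : Set.Icc (0 : ℝ) τ, |v n t - v₀ t|) atTop (𝓝 0))
    (hlb : ∀ n, ∀ t ∈ Set.Ioc 0 τ,
      δ ≤ lam * Function.leftLim (u n) t + (1 - lam) * Function.leftLim (v n) t)
    (ν : ℕ → Measure ℝ) (ν₀ : Measure ℝ)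
    (hν : ∀ n, ∀ a b : ℝ, a ∈ Set.Icc 0 τ → b ∈ Set.Icc 0 τ → a ≤ b →
      ν n (Set.Ioc a b) = ENNReal.ofReal (v n a - v n b))
    (hν₀ : ∀ a b : ℝ, a ∈ Set.Icc 0 τ → b ∈ Set.Icc 0 τ → a ≤ b →
      ν₀ (Set.Ioc a b) = ENNReal.ofReal (v₀ a - v₀ b)) :
    Tendsto
      (fun n => -∫ t in Set.Ioc (0 : ℝ) τ,
          Function.leftLim (u n) t /
            (lam * Function.leftLim (u n) t + (1 - lam) * Function.leftLim (v n) t) ∂(ν n))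
      atTop
      (𝓝 (-∫ t in Set.Ioc (0 : ℝ) τ, u₀ t / (lam * u₀ t + (1 - lam) * v₀ t) ∂ν₀)) := by
  have h0 : (0 : ℝ) ∈ Icc 0 τ := left_mem_Icc.2 hτ.le
  have hτ' : τ ∈ Icc 0 τ := right_mem_Icc.2 hτ.le
  have hu n t (ht : t ∈ Ioc 0 τ) :=
    (humono n).abs_leftLim_sub_le_iSup (hurange n) hu₀range hu₀cont ht
  have hv n t (ht : t ∈ Ioc 0 τ) :=
    (hvmono n).abs_leftLim_sub_le_iSup (hvrange n) hv₀range hv₀cont ht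
  have hden₀ : ContinuousOn (fun t => lam * u₀ t + (1 - lam) * v₀ t) (Icc 0 τ) :=
    (continuousOn_const.mul hu₀cont).add (continuousOn_const.mul hv₀cont)
  have hden : ∀ t ∈ Icc 0 τ, δ ≤ lam * u₀ t + (1 - lam) * v₀ t :=
    hden₀.forall_Icc_le_of_forall_Ioc hτ.ne fun t ht =>
    ge_of_tendsto' (((tendsto_of_abs_sub_le (hu · t ht) huconv).const_mul lam).add
      ((tendsto_of_abs_sub_le (hv · t ht) hvconv).const_mul (1 - lam))) (hlb · t ht)
  have hf₀ : ContinuousOn (fun t => u₀ t / (lam * u₀ t + (1 - lam) * v₀ t)) (Icc 0 τ) :=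
    hu₀cont.div hden₀ fun t ht => (hδ.trans_le (hden t ht)).ne'
  have hfin n := measure_Ioc_ne_top_of_eq_ofReal (hν n 0 τ h0 hτ' hτ.le)
  have hA := tendsto_setIntegral_sub_of_abs_sub_le measurableSet_Ioc hfin (M := 1)
    (fun n => by
      rw [measureReal_Ioc_of_eq_ofReal (hν n 0 τ h0 hτ' hτ.le)]
      exact max_le (by linarith [(hvrange n 0 h0).2, (hvrange n τ hτ').1]) zero_le_one)
    (fun n => by
      have hU := (humono n).aemeasurable_leftLim (μ := ν n)
      have hV := (hvmono n).aemeasurable_leftLim (μ := ν n)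
      exact (hU.div ((hU.const_mul lam).add (hV.const_mul (1 - lam)))).aestronglyMeasurable)
    (fun n => hf₀.integrableOn_Ioc (hfin n))
    (fun n t ht => abs_div_convexComb_sub_div_convexComb_le hlam hδ
      (hu₀range t (Ioc_subset_Icc_self ht)) (hlb n t ht) (hden t (Ioc_subset_Icc_self ht))
      (hu n t ht) (hv n t ht))
    (by simpa using (huconv.div_const δ).add ((huconv.add hvconv).div_const (δ ^ 2)))
  have hB := tendsto_setIntegral_Ioc_of_stieltjes hτ.le hν hν₀ (fun t ht =>
    tendsto_of_abs_sub_le (fun n => abs_sub_le_iSup_abs_sub (hvrange n) hv₀range ht) hvconv) hf₀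
  simpa using (hA.add hB).neg

/-- **Continuity of normalized hazard-type integrals under uniform convergence**
(supporting lemma for the GLR statistic).  `u n, v n, u₀, v₀ : [0,τ] → [0,1]` are
nonincreasing right-continuous with `u₀`, `v₀` continuous, `sup |u n - u₀| → 0`,
`sup |v n - v₀| → 0`, and `λ uₙ(t-) + (1-λ) vₙ(t-) ≥ δ` on `(0,τ]`.  `ν n` (resp. `ν₀`)
is the nonnegative Lebesgue–Stieltjes measure generated by `v n` (resp. `v₀`), so that
`∫ f dv = -∫ f ∂ν`.  Then
`∫_{(0,τ]} uₙ(t-)/(λ uₙ(t-) + (1-λ) vₙ(t-)) dvₙ(t) → ∫_{(0,τ]} u₀/(λ u₀ + (1-λ) v₀) dv₀`. -/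
theorem normalized_hazard_integral_continuity
    (τ δ lam : ℝ) (hτ : 0 < τ) (hδ : 0 < δ) (hlam : lam ∈ Set.Icc (0 : ℝ) 1)
    (u v : ℕ → ℝ → ℝ) (u₀ v₀ : ℝ → ℝ)
    (humono : ∀ n, AntitoneOn (u n) (Set.Icc 0 τ))
    (hvmono : ∀ n, AntitoneOn (v n) (Set.Icc 0 τ))
    (hurc : ∀ n, ∀ t ∈ Set.Ico 0 τ, ContinuousWithinAt (u n) (Set.Ici t) t)
    (hvrc : ∀ n, ∀ t ∈ Set.Ico 0 τ, ContinuousWithinAt (v n) (Set.Ici t) t)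
    (hurange : ∀ n, ∀ t ∈ Set.Icc 0 τ, u n t ∈ Set.Icc (0 : ℝ) 1)
    (hvrange : ∀ n, ∀ t ∈ Set.Icc 0 τ, v n t ∈ Set.Icc (0 : ℝ) 1)
    (hu₀mono : AntitoneOn u₀ (Set.Icc 0 τ)) (hv₀mono : AntitoneOn v₀ (Set.Icc 0 τ))
    (hu₀range : ∀ t ∈ Set.Icc 0 τ, u₀ t ∈ Set.Icc (0 : ℝ) 1)
    (hv₀range : ∀ t ∈ Set.Icc 0 τ, v₀ t ∈ Set.Icc (0 : ℝ) 1)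
    (hu₀cont : ContinuousOn u₀ (Set.Icc 0 τ)) (hv₀cont : ContinuousOn v₀ (Set.Icc 0 τ))
    (huconv : Tendsto (fun n => ⨆ t : Set.Icc (0 : ℝ) τ, |u n t - u₀ t|) atTop (𝓝 0))
    (hvconv : Tendsto (fun n => ⨆ t : Set.Icc (0 : ℝ) τ, |v n t - v₀ t|) atTop (𝓝 0))
    (hlb : ∀ n, ∀ t ∈ Set.Ioc 0 τ,
      δ ≤ lam * Function.leftLim (u n) t + (1 - lam) * Function.leftLim (v n) t)
    (ν : ℕ → Measure ℝ) (ν₀ : Measure ℝ)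
    (hν : ∀ n, ∀ a b : ℝ, a ∈ Set.Icc 0 τ → b ∈ Set.Icc 0 τ → a ≤ b →
      ν n (Set.Ioc a b) = ENNReal.ofReal (v n a - v n b))
    (hν₀ : ∀ a b : ℝ, a ∈ Set.Icc 0 τ → b ∈ Set.Icc 0 τ → a ≤ b →
      ν₀ (Set.Ioc a b) = ENNReal.ofReal (v₀ a - v₀ b)) :
    Tendsto
      (fun n => -∫ t in Set.Ioc (0 : ℝ) τ,
          Function.leftLim (u n) t /
            (lam * Function.leftLim (u n) t + (1 - lam) * Function.leftLim (v n) t) ∂(ν n))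
      atTop
      (𝓝 (-∫ t in Set.Ioc (0 : ℝ) τ, u₀ t / (lam * u₀ t + (1 - lam) * v₀ t) ∂ν₀)) :=
  normalized_hazard_integral_continuity_general τ δ lam hτ hδ hlam u v u₀ v₀ humono hvmono hurange
    hvrange hu₀range hv₀range hu₀cont hv₀cont huconv hvconv hlb ν ν₀ hν hν₀
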